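/- arXiv:2108.01273 — 2 statements merged into one kernel-verified Lean document; each statement's English description precedes it below -/
import Mathlib

section
/- Let r, ψ, f : ℝ → ℝ be non-decreasing and let a, c, b, B ∈ ℝ. Define F(t) = min( sSup { r( ψ(f(x) − b) + t − c − x ) : x ∈ [a, t − c] }, B ) for t ∈ [a + c, ∞). Then F is non-decreasing on [a + c, ∞). (This is Lemma 1's charging-station case in its original form (15): f_{i_k}(t) = min{ max over departure times x of r_{i_k}( r_{i_k}^{−1}(f_{i_{k−1}}(x) − b_{i_{k−1},i_k}) + t − t_{i_{k−1},i_k} − x ), B }, with the inverse charging function r_{i_k}^{−1} replaced by an arbitrary non-decreasing ψ.) -/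
/-! Increasing `t` both enlarges the range `[a, t - c]` of `x` and increases every value
`r (ψ (f x - b) + t - c - x)`, so the supremum can only grow. It is a genuine supremum, not the
junk value `0`: the set is bounded above by `r (ψ (f (t - c) - b) + t - c - a)`. -/

open Set

theorem csSup_image_le_csSup_image {α β : Type*} [ConditionallyCompleteLattice β] {g g' : α → β}
    {s t : Set α} (hs : s.Nonempty) (hst : s ⊆ t) (hg : ∀ x ∈ s, g x ≤ g' x)
    (hbdd : BddAbove (g' '' t)) : sSup (g '' s) ≤ sSup (g' '' t) :=
  csSup_le (hs.image g) <| by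
    rintro _ ⟨x, hx, rfl⟩
    exact (hg x hx).trans (le_csSup hbdd (mem_image_of_mem g' (hst hx)))

theorem Monotone.bddAbove_image_comp_sub_Icc {r g : ℝ → ℝ} (hr : Monotone r) (hg : Monotone g)
    (a u : ℝ) : BddAbove ((fun x => r (g x - x)) '' Icc a u) :=
  ⟨r (g u - a), by
    rintro _ ⟨x, hx, rfl⟩
    exact hr (by linarith [hg hx.2, hx.1])⟩

/-- Lemma 1's charging-station case in its original form (15):
`F t = min (sSup {r (ψ (f x - b) + t - c - x) : x ∈ [a, t - c]}) B`
is non-decreasing on `[a + c, ∞)`. -/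
theorem stmt_13 (r ψ f : ℝ → ℝ) (hr : Monotone r) (hψ : Monotone ψ)
    (hf : Monotone f) (a c b B : ℝ) :
    MonotoneOn (fun t : ℝ =>
      min (sSup ((fun x => r (ψ (f x - b) + t - c - x)) '' Set.Icc a (t - c))) B)
      (Set.Ici (a + c)) := by
  intro s hs t _ hst
  have hψf : Monotone fun x => ψ (f x - b) + t - c := fun x y hxy => by
    linarith [hψ (sub_le_sub_right (hf hxy) b)]
  refine min_le_min_right B (csSup_image_le_csSup_image ?_ ?_ ?_ ?_)
  · exact nonempty_Icc.2 (by linarith [mem_Ici.1 hs])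
  · exact Icc_subset_Icc_right (by linarith)
  · exact fun x _ => hr (by linarith)
  · exact hr.bddAbove_image_comp_sub_Icc hψf a (t - c)
end

section
/- Let r, ψ, g : ℝ → ℝ be non-decreasing and let c, ρ, b ∈ ℝ. Define G(t) = sInf { r( max( ψ(g(x)) − x + t + c, 0 ) ) : x ∈ [t + c, ρ] } + b for t ∈ (−∞, ρ − c]. Then G is non-decreasing on (−∞, ρ − c]. (This is Lemma 2's charging-station case in its original form (30): g_{i_k}(t) = min over departure times x of r_{i_{k−1}}( max{ r_{i_{k−1}}^{−1}(g_{i_{k−1}}(x)) − x + t + t_{i_k,i_{k−1}}, 0 } ) + b_{i_k,i_{k−1}}, with the inverse charging function r_{i_{k−1}}^{−1} replaced by an arbitrary non-decreasing ψ.) -/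
/-!
Increasing `t` shrinks the interval of departure times `[t + c, ρ]` and increases every argument
of `r`; an infimum over a smaller set of larger values can only be larger. Since the values of
`r` stay above `r 0`, all these infima are genuine.
-/

theorem csInf_image_le_csInf_image {α β : Type*} [ConditionallyCompleteLattice β]
    {f g : α → β} {s t : Set α} (hf : BddBelow (f '' s)) (ht : t.Nonempty) (hts : t ⊆ s)
    (hfg : ∀ x ∈ t, f x ≤ g x) :
    sInf (f '' s) ≤ sInf (g '' t) :=
  le_csInf (ht.image g) <| Set.forall_mem_image.2 fun x hx =>
    (csInf_le hf (Set.mem_image_of_mem f (hts hx))).trans (hfg x hx)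

theorem bddBelow_image_comp_max_zero {α : Type*} {r : ℝ → ℝ} (hr : Monotone r) (h : α → ℝ)
    (s : Set α) : BddBelow ((fun x => r (max (h x) 0)) '' s) :=
  ⟨r 0, Set.forall_mem_image.2 fun _ _ => hr (le_max_right _ _)⟩

theorem stmt_14_general (r ψ g : ℝ → ℝ) (hr : Monotone r) (c ρ b : ℝ) :
    MonotoneOn (fun t : ℝ =>
      sInf ((fun x => r (max (ψ (g x) - x + t + c) 0)) '' Set.Icc (t + c) ρ) + b)
      (Set.Iic (ρ - c)) := by
  intro t₁ _ t₂ ht₂ hle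
  have hne : (Set.Icc (t₂ + c) ρ).Nonempty := Set.nonempty_Icc.2 (by linarith [Set.mem_Iic.1 ht₂])
  have hsub : Set.Icc (t₂ + c) ρ ⊆ Set.Icc (t₁ + c) ρ := Set.Icc_subset_Icc_left (by linarith)
  refine add_le_add_left (csInf_image_le_csInf_image
    (bddBelow_image_comp_max_zero hr _ _) hne hsub fun x _ => hr ?_) b
  exact max_le_max (by linarith) le_rfl

/-- Lemma 2's charging-station case in its original form (30):
`G t = sInf {r (max (ψ (g x) - x + t + c) 0) : x ∈ [t + c, ρ]} + b`
is non-decreasing on `(-∞, ρ - c]`. -/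
theorem stmt_14 (r ψ g : ℝ → ℝ) (hr : Monotone r) (hψ : Monotone ψ)
    (hg : Monotone g) (c ρ b : ℝ) :
    MonotoneOn (fun t : ℝ =>
      sInf ((fun x => r (max (ψ (g x) - x + t + c) 0)) '' Set.Icc (t + c) ρ) + b)
      (Set.Iic (ρ - c)) :=
  stmt_14_general r ψ g hr c ρ b
end
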